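/- (Terracini's lemma, containment part) Let X, Y ⊆ ℙⁿ be reduced irreducible projective varieties, possibly singular, over an algebraically closed field k. Let x ∈ X and y ∈ Y be distinct points, and let z be any point on the line through x and y. Then span(T_{X,x}, T_{Y,y}) ⊆ T_{EJ(X,Y), z}. -/

import Mathlib

/-!
Set-level classical algebraic geometry over projective space, providing the
constructions of M. Dale's "Terracini's lemma and the secant variety of a curve"
extended to embedded joins, following J. Beckman.

* `ℙⁿ` over `k` is modelled as `Projectivization k (ι → k)` for a finite index
  type `ι` (typically `Fin (n+1)`), equipped with the Zariski topology `PT`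
  generated by zero loci of polynomials (vanishing being required on all
  representatives of a point, which is exactly vanishing of all homogeneous
  components on the point).  Products of projective spaces carry the analogous
  (multi-)Zariski topologies `PT2`, `PT3`, `PT4`, which are finer than the
  product topologies, as they should be.
* Lines in `ℙⁿ` are encoded by their Plücker points in `ℙ(ι × ι → k)`
  (the projectivized space of `2×2`-minors matrices `x ∧ y`), so that the
  Grassmannian `G(1,n)` carries its Zariski topology as a subspace; `onLine`
  is the incidence relation.
* Embedded (projective) tangent spaces are cut out by the Jacobians of the
  vanishing ideal: `aT X x` is the affine cone of the embedded tangent space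
  of `X` at `x` and `pT X x` its projectivization; similarly `aT2`, `aT3`,
  `aT4` for subvarieties of products.
* The degree of a dominant, generically finite map is modelled by generic
  fibre cardinality (`DegreeOn`), and separable generation of the function
  field extension of a dominant map by generic surjectivity of the induced
  tangent map (generic smoothness, `SepGen…`), as is classically equivalent.
-/

noncomputable section

open MvPolynomial Module Set

/-- Projective space on the coordinate space `ι → k`. -/
abbrev Pj (k : Type) [Field k] (ι : Type) := Projectivization k (ι → k)

variable {k : Type} [Field k]

/-- `v` is a representative vector of the projective point `p`. -/
def PRep {ι : Type} (v : ι → k) (p : Pj k ι) : Prop :=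
  ∃ hv : v ≠ 0, Projectivization.mk k v hv = p

/-- A default point of projective space (all coordinates equal to `1`). -/
def defaultPt (k : Type) [Field k] (ι : Type) [Nonempty ι] : Pj k ι :=
  Projectivization.mk k (fun _ => (1 : k))
    (fun h => one_ne_zero (congrFun h (Classical.arbitrary ι)))

open scoped Classical in
/-- The projective point with representative `v`, or a default point if `v = 0`. -/
def mkOr {ι : Type} [Nonempty ι] (v : ι → k) : Pj k ι :=
  if h : v ≠ 0 then Projectivization.mk k v h else defaultPt k ι

/-- Zero locus in projective space: points all of whose representatives kill `f`
(equilvalently, the common zero locus of the homogeneous components of `f`). -/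
def ZL {ι : Type} (f : MvPolynomial ι k) : Set (Pj k ι) :=
  {p | ∀ v, PRep v p → eval v f = 0}

/-- The Zariski topology on projective space. -/
def PT (k : Type) [Field k] (ι : Type) : TopologicalSpace (Pj k ι) :=
  TopologicalSpace.generateFrom {U | ∃ f : MvPolynomial ι k, U = (ZL f)ᶜ}

/-- Joint representative of a pair of projective points. -/
def PRep2 {ι κ : Type} (u : ι ⊕ κ → k) (p : Pj k ι × Pj k κ) : Prop :=
  PRep (fun i => u (Sum.inl i)) p.1 ∧ PRep (fun j => u (Sum.inr j)) p.2

/-- Bihomogeneous zero locus in a product of two projective spaces. -/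
def ZL2 {ι κ : Type} (f : MvPolynomial (ι ⊕ κ) k) : Set (Pj k ι × Pj k κ) :=
  {p | ∀ u, PRep2 u p → eval u f = 0}

/-- The Zariski topology on a product of two projective spaces. -/
def PT2 (k : Type) [Field k] (ι κ : Type) : TopologicalSpace (Pj k ι × Pj k κ) :=
  TopologicalSpace.generateFrom {U | ∃ f : MvPolynomial (ι ⊕ κ) k, U = (ZL2 f)ᶜ}

/-- Joint representative of a triple of projective points. -/
def PRep3 {ι κ μ : Type} (u : ι ⊕ (κ ⊕ μ) → k) (p : Pj k ι × Pj k κ × Pj k μ) : Prop :=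
  PRep (fun i => u (Sum.inl i)) p.1 ∧ PRep (fun i => u (Sum.inr (Sum.inl i))) p.2.1 ∧
    PRep (fun i => u (Sum.inr (Sum.inr i))) p.2.2

/-- Multihomogeneous zero locus in a product of three projective spaces. -/
def ZL3 {ι κ μ : Type} (f : MvPolynomial (ι ⊕ (κ ⊕ μ)) k) : Set (Pj k ι × Pj k κ × Pj k μ) :=
  {p | ∀ u, PRep3 u p → eval u f = 0}

/-- The Zariski topology on a product of three projective spaces. -/
def PT3 (k : Type) [Field k] (ι κ μ : Type) : TopologicalSpace (Pj k ι × Pj k κ × Pj k μ) :=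
  TopologicalSpace.generateFrom {U | ∃ f : MvPolynomial (ι ⊕ (κ ⊕ μ)) k, U = (ZL3 f)ᶜ}

/-- Joint representative of a quadruple of projective points. -/
def PRep4 {ι κ μ ν : Type} (u : ι ⊕ (κ ⊕ (μ ⊕ ν)) → k)
    (p : Pj k ι × Pj k κ × Pj k μ × Pj k ν) : Prop :=
  PRep (fun i => u (Sum.inl i)) p.1 ∧ PRep (fun i => u (Sum.inr (Sum.inl i))) p.2.1 ∧
    PRep (fun i => u (Sum.inr (Sum.inr (Sum.inl i)))) p.2.2.1 ∧
    PRep (fun i => u (Sum.inr (Sum.inr (Sum.inr i)))) p.2.2.2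

/-- Multihomogeneous zero locus in a product of four projective spaces. -/
def ZL4 {ι κ μ ν : Type} (f : MvPolynomial (ι ⊕ (κ ⊕ (μ ⊕ ν))) k) :
    Set (Pj k ι × Pj k κ × Pj k μ × Pj k ν) :=
  {p | ∀ u, PRep4 u p → eval u f = 0}

/-- The Zariski topology on a product of four projective spaces. -/
def PT4 (k : Type) [Field k] (ι κ μ ν : Type) :
    TopologicalSpace (Pj k ι × Pj k κ × Pj k μ × Pj k ν) :=
  TopologicalSpace.generateFrom {U | ∃ f : MvPolynomial (ι ⊕ (κ ⊕ (μ ⊕ ν))) k, U = (ZL4 f)ᶜ}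

/-- The (homogeneous) vanishing ideal of a subset of projective space. -/
def VI {ι : Type} (X : Set (Pj k ι)) : Set (MvPolynomial ι k) :=
  {f | ∀ p ∈ X, ∀ v, PRep v p → eval v f = 0}

/-- The linear functional `a ↦ ∑ i, c i * a i` (a row of a Jacobian). -/
def jac {ι : Type} [Fintype ι] (c : ι → k) : (ι → k) →ₗ[k] k :=
  ∑ i, c i • (LinearMap.proj i : (ι → k) →ₗ[k] k)

/-- The affine cone of the embedded tangent space of `X ⊆ ℙ(ι → k)` at `x`:
the common kernel of the differentials at `x` of all elements of the
vanishing ideal of `X`. -/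
def aT {ι : Type} [Fintype ι] (X : Set (Pj k ι)) (x : Pj k ι) : Submodule k (ι → k) :=
  ⨅ f ∈ VI X, LinearMap.ker (jac fun i => eval x.rep (pderiv i f))

/-- The embedded projective tangent space of `X` at `x`. -/
def pT {ι : Type} [Fintype ι] (X : Set (Pj k ι)) (x : Pj k ι) : Set (Pj k ι) :=
  {p | ∀ v, PRep v p → v ∈ aT X x}

/-- The vanishing ideal of a subset of a product of two projective spaces. -/
def VI2 {ι κ : Type} (W : Set (Pj k ι × Pj k κ)) : Set (MvPolynomial (ι ⊕ κ) k) :=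
  {f | ∀ p ∈ W, ∀ u, PRep2 u p → eval u f = 0}

/-- Canonical joint representative of a pair of projective points. -/
def rep2 {ι κ : Type} (w : Pj k ι × Pj k κ) : ι ⊕ κ → k := Sum.elim w.1.rep w.2.rep

/-- The affine cone of the embedded tangent space of `W ⊆ ℙ × ℙ` at `w`. -/
def aT2 {ι κ : Type} [Fintype ι] [Fintype κ] (W : Set (Pj k ι × Pj k κ))
    (w : Pj k ι × Pj k κ) : Submodule k (ι ⊕ κ → k) :=
  ⨅ f ∈ VI2 W, LinearMap.ker (jac fun s => eval (rep2 w) (pderiv s f))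

/-- The embedded tangent space of `W ⊆ ℙ × ℙ` at `w`, as a subset of `ℙ × ℙ`. -/
def pT2 {ι κ : Type} [Fintype ι] [Fintype κ] (W : Set (Pj k ι × Pj k κ))
    (w : Pj k ι × Pj k κ) : Set (Pj k ι × Pj k κ) :=
  {q | ∃ u ∈ aT2 W w, PRep2 u q}

/-- The vanishing ideal of a subset of a product of three projective spaces. -/
def VI3 {ι κ μ : Type} (W : Set (Pj k ι × Pj k κ × Pj k μ)) :
    Set (MvPolynomial (ι ⊕ (κ ⊕ μ)) k) :=
  {f | ∀ p ∈ W, ∀ u, PRep3 u p → eval u f = 0}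

/-- Canonical joint representative of a triple of projective points. -/
def rep3 {ι κ μ : Type} (w : Pj k ι × Pj k κ × Pj k μ) : ι ⊕ (κ ⊕ μ) → k :=
  Sum.elim w.1.rep (Sum.elim w.2.1.rep w.2.2.rep)

/-- The affine cone of the embedded tangent space of `W ⊆ ℙ × ℙ × ℙ` at `w`. -/
def aT3 {ι κ μ : Type} [Fintype ι] [Fintype κ] [Fintype μ]
    (W : Set (Pj k ι × Pj k κ × Pj k μ)) (w : Pj k ι × Pj k κ × Pj k μ) :
    Submodule k (ι ⊕ (κ ⊕ μ) → k) :=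
  ⨅ f ∈ VI3 W, LinearMap.ker (jac fun s => eval (rep3 w) (pderiv s f))

/-- The vanishing ideal of a subset of a product of four projective spaces. -/
def VI4 {ι κ μ ν : Type} (W : Set (Pj k ι × Pj k κ × Pj k μ × Pj k ν)) :
    Set (MvPolynomial (ι ⊕ (κ ⊕ (μ ⊕ ν))) k) :=
  {f | ∀ p ∈ W, ∀ u, PRep4 u p → eval u f = 0}

/-- Canonical joint representative of a quadruple of projective points. -/
def rep4 {ι κ μ ν : Type} (w : Pj k ι × Pj k κ × Pj k μ × Pj k ν) :
    ι ⊕ (κ ⊕ (μ ⊕ ν)) → k :=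
  Sum.elim w.1.rep (Sum.elim w.2.1.rep (Sum.elim w.2.2.1.rep w.2.2.2.rep))

/-- The affine cone of the embedded tangent space of `W ⊆ ℙ × ℙ × ℙ × ℙ` at `w`. -/
def aT4 {ι κ μ ν : Type} [Fintype ι] [Fintype κ] [Fintype μ] [Fintype ν]
    (W : Set (Pj k ι × Pj k κ × Pj k μ × Pj k ν)) (w : Pj k ι × Pj k κ × Pj k μ × Pj k ν) :
    Submodule k (ι ⊕ (κ ⊕ (μ ⊕ ν)) → k) :=
  ⨅ f ∈ VI4 W, LinearMap.ker (jac fun s => eval (rep4 w) (pderiv s f))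

/-- The projective linear span of a set of projective points. -/
def pSpan {ι : Type} (S : Set (Pj k ι)) : Set (Pj k ι) :=
  {p | p.rep ∈ Submodule.span k (Projectivization.rep '' S)}

/-- The line through two (distinct) projective points, as a set of points. -/
def lineSet {ι : Type} (x y : Pj k ι) : Set (Pj k ι) := pSpan {x, y}

/-- The union of the lines joining distinct points of `X` and `Y`. -/
def joinSet {ι : Type} (X Y : Set (Pj k ι)) : Set (Pj k ι) :=
  ⋃ x ∈ X, ⋃ y ∈ Y, ⋃ (_ : x ≠ y), lineSet x y

/-- The embedded join `EJ(X,Y)`: the Zariski closure of the union of all lines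
joining distinct points of `X` and `Y`. -/
def EJ {ι : Type} (X Y : Set (Pj k ι)) : Set (Pj k ι) := @closure _ (PT k ι) (joinSet X Y)

/-- The wedge (matrix of `2×2` minors) of two coordinate vectors; its
projectivization is the Plücker point of the line they span. -/
def wedge {ι : Type} (a b : ι → k) : ι × ι → k := fun q => a q.1 * b q.2 - a q.2 * b q.1

open scoped Classical in
/-- The Plücker point in `ℙ(ι × ι → k)` of the line through `x` and `y`. -/
def pluck {ι : Type} [Nonempty ι] (x y : Pj k ι) : Pj k (ι × ι) :=
  if h : wedge x.rep y.rep ≠ 0 then Projectivization.mk k _ h else defaultPt k (ι × ι)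

/-- Incidence of a point `z ∈ ℙⁿ` with (the Plücker point of) a line `l`. -/
def onLine {ι : Type} (z : Pj k ι) (l : Pj k (ι × ι)) : Prop :=
  ∀ a b, PRep a z → PRep b l →
    ∀ i j m, b (i, j) * a m + b (j, m) * a i + b (m, i) * a j = 0

/-- The set of points of `ℙⁿ` lying on the line with Plücker point `l`. -/
def linePts {ι : Type} (l : Pj k (ι × ι)) : Set (Pj k ι) := {z | onLine z l}

/-- `JL(X,Y) ⊆ G(1,n)`: the variety of join lines of `X` and `Y`, i.e. the
closure (inside the Plücker projective space) of the set of lines through a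
point of `X` and a distinct point of `Y`. -/
def JL {ι : Type} [Nonempty ι] (X Y : Set (Pj k ι)) : Set (Pj k (ι × ι)) :=
  @closure _ (PT k (ι × ι)) {l | ∃ x ∈ X, ∃ y ∈ Y, x ≠ y ∧ l = pluck x y}

/-- `JB(X,Y) = {(z,l) : z ∈ l ∈ JL(X,Y)} ⊆ ℙⁿ × G(1,n)`. -/
def JB {ι : Type} [Nonempty ι] (X Y : Set (Pj k ι)) : Set (Pj k ι × Pj k (ι × ι)) :=
  {q | q.2 ∈ JL X Y ∧ onLine q.1 q.2}

/-- `Γ(X,Y) ⊆ ℙⁿ × ℙⁿ × G(1,n)`: the closure of the graph of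
`(x,y) ↦ line(x,y)`. -/
def Gam {ι : Type} [Nonempty ι] (X Y : Set (Pj k ι)) :
    Set (Pj k ι × Pj k ι × Pj k (ι × ι)) :=
  @closure _ (PT3 k ι ι (ι × ι))
    {q | q.1 ∈ X ∧ q.2.1 ∈ Y ∧ q.1 ≠ q.2.1 ∧ q.2.2 = pluck q.1 q.2.1}

/-- `W(X)`: the closure of `{(x,z) : x ∈ X, z ∈ L for some join line L ∋ x}`. -/
def Wx {ι : Type} [Nonempty ι] (X Y : Set (Pj k ι)) : Set (Pj k ι × Pj k ι) :=
  @closure _ (PT2 k ι ι) {q | ∃ l ∈ JL X Y, q.1 ∈ X ∧ onLine q.1 l ∧ onLine q.2 l}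

/-- `W(Y)`: the closure of `{(z,y) : y ∈ Y, z ∈ L for some join line L ∋ y}`. -/
def Wy {ι : Type} [Nonempty ι] (X Y : Set (Pj k ι)) : Set (Pj k ι × Pj k ι) :=
  @closure _ (PT2 k ι ι) {q | ∃ l ∈ JL X Y, q.2 ∈ Y ∧ onLine q.2 l ∧ onLine q.1 l}

/-- `N(X)`: the closure of `{(x,z,l) : z ∈ l ∈ JB(X,Y), x ∈ l ∩ X}`. -/
def Nx {ι : Type} [Nonempty ι] (X Y : Set (Pj k ι)) :
    Set (Pj k ι × Pj k ι × Pj k (ι × ι)) :=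
  @closure _ (PT3 k ι ι (ι × ι))
    {q | q.2.2 ∈ JL X Y ∧ q.1 ∈ X ∧ onLine q.1 q.2.2 ∧ onLine q.2.1 q.2.2}

/-- `N(Y)`: the closure of `{(z,y,l) : z ∈ l ∈ JB(X,Y), y ∈ l ∩ Y}`. -/
def Ny {ι : Type} [Nonempty ι] (X Y : Set (Pj k ι)) :
    Set (Pj k ι × Pj k ι × Pj k (ι × ι)) :=
  @closure _ (PT3 k ι ι (ι × ι))
    {q | q.2.2 ∈ JL X Y ∧ q.2.1 ∈ Y ∧ onLine q.2.1 q.2.2 ∧ onLine q.1 q.2.2}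

/-- `M(X,Y)`: the closure of
`{(x,z,y,l) : z ∈ l ∈ JB(X,Y), x ∈ l ∩ X, y ∈ l ∩ Y}`. -/
def Mj {ι : Type} [Nonempty ι] (X Y : Set (Pj k ι)) :
    Set (Pj k ι × Pj k ι × Pj k ι × Pj k (ι × ι)) :=
  @closure _ (PT4 k ι ι ι (ι × ι))
    {q | q.2.2.2 ∈ JL X Y ∧ q.1 ∈ X ∧ q.2.2.1 ∈ Y ∧
      onLine q.1 q.2.2.2 ∧ onLine q.2.1 q.2.2.2 ∧ onLine q.2.2.1 q.2.2.2}

/-- Dimension of a subset in a given topology (topological Krull dimension). -/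
def dimOf {α : Type} (t : TopologicalSpace α) (S : Set α) : WithBot ℕ∞ :=
  @topologicalKrullDim S (TopologicalSpace.induced Subtype.val t)

/-- `U` is an open dense subset of `S` (in the subspace topology). -/
def OpenDenseIn {α : Type} (t : TopologicalSpace α) (U S : Set α) : Prop :=
  U ⊆ S ∧ (∃ V, @IsOpen _ t V ∧ U = V ∩ S) ∧ S ⊆ @closure _ t U

/-- `f` maps `S` dominantly onto `T`. -/
def DominantOn {α β : Type} (tβ : TopologicalSpace β) (S : Set α) (T : Set β)
    (f : α → β) : Prop :=
  T ⊆ @closure _ tβ (f '' S)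

/-- `f : S → T` is dominant of degree `d`: the general fibre consists of
exactly `d` points. -/
def DegreeOn {α β : Type} (tβ : TopologicalSpace β) (S : Set α) (T : Set β)
    (f : α → β) (d : ℕ) : Prop :=
  DominantOn tβ S T f ∧
    ∃ U, OpenDenseIn tβ U T ∧ ∀ b ∈ U, (S ∩ f ⁻¹' {b}).Finite ∧ (S ∩ f ⁻¹' {b}).ncard = d

/-- `l` is an `(mX, mY)`-join line: it meets `X` in `mX` and `Y` in `mY` points. -/
def JoinLineType {ι : Type} (X Y : Set (Pj k ι)) (mX mY : ℕ) (l : Pj k (ι × ι)) : Prop :=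
  (X ∩ linePts l).Finite ∧ (X ∩ linePts l).ncard = mX ∧
    (Y ∩ linePts l).Finite ∧ (Y ∩ linePts l).ncard = mY

/-- `EJ(X,Y)` is `(mX,mY)`-joined: the general join line is an `(mX,mY)`-join line. -/
def IsJoined {ι : Type} [Nonempty ι] (X Y : Set (Pj k ι)) (mX mY : ℕ) : Prop :=
  ∃ U, OpenDenseIn (PT k (ι × ι)) U (JL X Y) ∧ ∀ l ∈ U, JoinLineType X Y mX mY l

/-- `t(X,Y) + 1`: the minimal value of `dim (cone T_{X,x} ∩ cone T_{Y,y})`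
(one more than the minimal dimension of the intersection of embedded
projective tangent spaces). -/
def tJ {ι : Type} [Fintype ι] (X Y : Set (Pj k ι)) : ℕ :=
  sInf {d | ∃ x ∈ X, ∃ y ∈ Y, finrank k ↥(aT X x ⊓ aT Y y) = d}

/-- `X, Y` is a constrained pair:
`dim EJ(X,Y) > dim X + dim Y - t(X,Y)`. -/
def ConstrainedPair {ι : Type} [Fintype ι] (X Y : Set (Pj k ι)) : Prop :=
  dimOf (PT k ι) X + dimOf (PT k ι) Y + 1 <
    dimOf (PT k ι) (EJ X Y) + (tJ X Y : WithBot ℕ∞)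

/-- The first inclusion `ℙⁿ ↪ ℙ^{2n+1}`, `[a] ↦ [a, 0]`. -/
def embL {ι : Type} (x : Pj k ι) : Pj k (ι ⊕ ι) :=
  Projectivization.mk k (Sum.elim x.rep 0)
    (fun h => x.rep_nonzero (funext fun i => congrFun h (Sum.inl i)))

/-- The second inclusion `ℙⁿ ↪ ℙ^{2n+1}`, `[b] ↦ [0, b]`. -/
def embR {ι : Type} (x : Pj k ι) : Pj k (ι ⊕ ι) :=
  Projectivization.mk k (Sum.elim 0 x.rep)
    (fun h => x.rep_nonzero (funext fun i => congrFun h (Sum.inr i)))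

/-- The ruled join `RJ(X,Y) ⊆ ℙ^{2n+1}`: the embedded join of disjoint copies
of `X` and `Y` placed in complementary `n`-planes. -/
def RJ {ι : Type} (X Y : Set (Pj k ι)) : Set (Pj k (ι ⊕ ι)) :=
  EJ (embL '' X) (embR '' Y)

/-- The linear map `(a, b) ↦ a - b` inducing the projection
`ℙ^{2n+1} ⇢ ℙⁿ` with centre `V(a₀ - b₀, …, aₙ - bₙ)`. -/
def diffL (k : Type) [Field k] (ι : Type) : ((ι ⊕ ι) → k) →ₗ[k] (ι → k) :=
  LinearMap.funLeft k k Sum.inl - LinearMap.funLeft k k Sum.inr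

open scoped Classical in
/-- The canonical projection `π : ℙ^{2n+1} ⇢ ℙⁿ` (restricting to
`RJ(X,Y) ⇢ EJ(X,Y)`), with junk value on its centre. -/
def rjProj {ι : Type} [Nonempty ι] (p : Pj k (ι ⊕ ι)) : Pj k ι :=
  if h : diffL k ι p.rep ≠ 0 then Projectivization.mk k _ h else defaultPt k ι

/-- `X` is a (projective) linear subspace. -/
def IsLinearSub {ι : Type} (X : Set (Pj k ι)) : Prop :=
  ∃ V : Submodule k (ι → k), X = {p | p.rep ∈ V}

/-- `X` is nondegenerate: it is contained in no hyperplane. -/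
def Nondeg {ι : Type} (X : Set (Pj k ι)) : Prop :=
  ¬∃ V : Submodule k (ι → k), V ≠ ⊤ ∧ ∀ x ∈ X, x.rep ∈ V

/-- `X, Y` is a strange pair: some nonempty projective linear space (with
affine cone `V`) is contained in every embedded tangent space of `X` and of `Y`. -/
def StrangePair {ι : Type} [Fintype ι] (X Y : Set (Pj k ι)) : Prop :=
  ∃ V : Submodule k (ι → k), V ≠ ⊥ ∧ (∀ x ∈ X, V ≤ aT X x) ∧ ∀ y ∈ Y, V ≤ aT Y y

/-- `x` is a regular (smooth) point of `X`: its embedded tangent space has the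
same dimension as `X`. -/
def RegPt {ι : Type} [Fintype ι] (X : Set (Pj k ι)) (x : Pj k ι) : Prop :=
  x ∈ X ∧ (finrank k ↥(aT X x) : WithBot ℕ∞) = dimOf (PT k ι) X + 1

/-- `w` is a regular (smooth) point of `W ⊆ ℙ × ℙ`. -/
def RegPt2 {ι κ : Type} [Fintype ι] [Fintype κ] (W : Set (Pj k ι × Pj k κ))
    (w : Pj k ι × Pj k κ) : Prop :=
  w ∈ W ∧ (finrank k ↥(aT2 W w) : WithBot ℕ∞) = dimOf (PT2 k ι κ) W + 2

/-- The Fano variety `F₁(Y)` of lines contained in `Y`, inside the Plücker space. -/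
def Fano1 {ι : Type} [Nonempty ι] (Y : Set (Pj k ι)) : Set (Pj k (ι × ι)) :=
  {l | (∃ x y, x ≠ y ∧ l = pluck x y) ∧ linePts l ⊆ Y}

/-- Separable generation of the function field extension of a dominant map
`ℙ ⊇ S → T ⊆ ℙ` induced by a linear map `L` on the affine cones, modelled by
generic surjectivity of the tangent map (generic smoothness). -/
def SepGen11 {ι κ : Type} [Fintype ι] [Fintype κ] (S : Set (Pj k ι)) (T : Set (Pj k κ))
    (f : Pj k ι → Pj k κ) (L : (ι → k) →ₗ[k] (κ → k)) : Prop :=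
  DominantOn (PT k κ) S T f ∧
    ∃ U, OpenDenseIn (PT k ι) U S ∧ ∀ p ∈ U, (aT S p).map L = aT T (f p)

/-- Separable generation for a dominant map `ℙ × ℙ ⊇ S → T ⊆ ℙ`, modelled by
generic surjectivity of the tangent map. -/
def SepGen21 {ι κ μ : Type} [Fintype ι] [Fintype κ] [Fintype μ]
    (S : Set (Pj k ι × Pj k κ)) (T : Set (Pj k μ))
    (f : Pj k ι × Pj k κ → Pj k μ) (L : ((ι ⊕ κ) → k) →ₗ[k] (μ → k)) : Prop :=
  DominantOn (PT k μ) S T f ∧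
    ∃ U, OpenDenseIn (PT2 k ι κ) U S ∧ ∀ q ∈ U, (aT2 S q).map L = aT T (f q)

/-- Separable generation for a dominant map `ℙ³ ⊇ S → T ⊆ ℙ²`, modelled by
generic surjectivity of the tangent map. -/
def SepGen32 {ι κ μ κ' μ' : Type} [Fintype ι] [Fintype κ] [Fintype μ]
    [Fintype κ'] [Fintype μ']
    (S : Set (Pj k ι × Pj k κ × Pj k μ)) (T : Set (Pj k κ' × Pj k μ'))
    (f : Pj k ι × Pj k κ × Pj k μ → Pj k κ' × Pj k μ')
    (L : ((ι ⊕ (κ ⊕ μ)) → k) →ₗ[k] ((κ' ⊕ μ') → k)) : Prop :=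
  DominantOn (PT2 k κ' μ') S T f ∧
    ∃ U, OpenDenseIn (PT3 k ι κ μ) U S ∧ ∀ q ∈ U, (aT3 S q).map L = aT2 T (f q)

/-- Separable generation for a dominant map `ℙ⁴ ⊇ S → T ⊆ ℙ³`, modelled by
generic surjectivity of the tangent map. -/
def SepGen43 {ι κ μ ν ι' κ' μ' : Type} [Fintype ι] [Fintype κ] [Fintype μ] [Fintype ν]
    [Fintype ι'] [Fintype κ'] [Fintype μ']
    (S : Set (Pj k ι × Pj k κ × Pj k μ × Pj k ν)) (T : Set (Pj k ι' × Pj k κ' × Pj k μ'))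
    (f : Pj k ι × Pj k κ × Pj k μ × Pj k ν → Pj k ι' × Pj k κ' × Pj k μ')
    (L : ((ι ⊕ (κ ⊕ (μ ⊕ ν))) → k) →ₗ[k] ((ι' ⊕ (κ' ⊕ μ')) → k)) : Prop :=
  DominantOn (PT3 k ι' κ' μ') S T f ∧
    ∃ U, OpenDenseIn (PT4 k ι κ μ ν) U S ∧ ∀ q ∈ U, (aT4 S q).map L = aT3 T (f q)
/-- Coordinates of a point of `𝔸ⁿ⁺¹ × 𝔸ⁿ⁺¹ × 𝔸¹` as a single function. -/
def coordA {ι : Type} (a : (ι → k) × (ι → k) × k) : (ι ⊕ (ι ⊕ Unit)) → k :=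
  Sum.elim a.1 (Sum.elim a.2.1 fun _ => a.2.2)

/-- Affine zero locus in `𝔸ⁿ⁺¹ × 𝔸ⁿ⁺¹ × 𝔸¹`. -/
def ZLA {ι : Type} (f : MvPolynomial (ι ⊕ (ι ⊕ Unit)) k) : Set ((ι → k) × (ι → k) × k) :=
  {a | eval (coordA a) f = 0}

/-- The Zariski topology on `𝔸ⁿ⁺¹ × 𝔸ⁿ⁺¹ × 𝔸¹`. -/
def PTA (k : Type) [Field k] (ι : Type) : TopologicalSpace ((ι → k) × (ι → k) × k) :=
  TopologicalSpace.generateFrom {U | ∃ f : MvPolynomial (ι ⊕ (ι ⊕ Unit)) k, U = (ZLA f)ᶜ}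

/-- Vanishing ideal of a subset of `𝔸ⁿ⁺¹ × 𝔸ⁿ⁺¹ × 𝔸¹`. -/
def VIA {ι : Type} (S : Set ((ι → k) × (ι → k) × k)) :
    Set (MvPolynomial (ι ⊕ (ι ⊕ Unit)) k) :=
  {f | ∀ a ∈ S, eval (coordA a) f = 0}

/-- Affine tangent space (Zariski tangent space) of `S ⊆ 𝔸ⁿ⁺¹ × 𝔸ⁿ⁺¹ × 𝔸¹` at `a`. -/
def aTA {ι : Type} [Fintype ι] (S : Set ((ι → k) × (ι → k) × k))
    (a : (ι → k) × (ι → k) × k) : Submodule k ((ι ⊕ (ι ⊕ Unit)) → k) :=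
  ⨅ f ∈ VIA S, LinearMap.ker (jac fun s => eval (coordA a) (pderiv s f))

/-- The domain of Dale's map `φ`: pairs of points of (the cones over) `X` and `Y`
normalised in the affine charts `{v i0 = 1}`, `{w j0 = 1}`, together with `t ∈ 𝔸¹`. -/
def phiDom {ι : Type} [Nonempty ι] (i0 j0 : ι) (X Y : Set (Pj k ι)) :
    Set ((ι → k) × (ι → k) × k) :=
  {a | a.1 i0 = 1 ∧ mkOr a.1 ∈ X ∧ a.2.1 j0 = 1 ∧ mkOr a.2.1 ∈ Y}

/-- `φ_X (x, y, t) = (x, t·x + (1-t)·y)`. -/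
def phiX {ι : Type} [Nonempty ι] (a : (ι → k) × (ι → k) × k) : Pj k ι × Pj k ι :=
  (mkOr a.1, mkOr (a.2.2 • a.1 + (1 - a.2.2) • a.2.1))

/-- `φ_Y (x, y, t) = (t·x + (1-t)·y, y)`. -/
def phiY {ι : Type} [Nonempty ι] (a : (ι → k) × (ι → k) × k) : Pj k ι × Pj k ι :=
  (mkOr (a.2.2 • a.1 + (1 - a.2.2) • a.2.1), mkOr a.2.1)

/-- The differential of `φ_X` at `(v, w, t)`, on affine (cone) coordinates:
`(dv, dw, dt) ↦ (dv, t·dv + (1-t)·dw + dt·(v - w))`. -/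
def dPhiX {ι : Type} [Fintype ι] (v w : ι → k) (t : k) :
    ((ι ⊕ (ι ⊕ Unit)) → k) →ₗ[k] ((ι ⊕ ι) → k) :=
  LinearMap.pi fun s => Sum.elim
    (fun i => (LinearMap.proj (Sum.inl i) : ((ι ⊕ (ι ⊕ Unit)) → k) →ₗ[k] k))
    (fun i =>
      t • (LinearMap.proj (Sum.inl i) : ((ι ⊕ (ι ⊕ Unit)) → k) →ₗ[k] k)
        + (1 - t) • (LinearMap.proj (Sum.inr (Sum.inl i)) : ((ι ⊕ (ι ⊕ Unit)) → k) →ₗ[k] k)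
        + (v i - w i) •
            (LinearMap.proj (Sum.inr (Sum.inr ())) : ((ι ⊕ (ι ⊕ Unit)) → k) →ₗ[k] k)) s

/-- The differential of `φ_Y` at `(v, w, t)`, on affine (cone) coordinates:
`(dv, dw, dt) ↦ (t·dv + (1-t)·dw + dt·(v - w), dw)`. -/
def dPhiY {ι : Type} [Fintype ι] (v w : ι → k) (t : k) :
    ((ι ⊕ (ι ⊕ Unit)) → k) →ₗ[k] ((ι ⊕ ι) → k) :=
  LinearMap.pi fun s => Sum.elim
    (fun i =>
      t • (LinearMap.proj (Sum.inl i) : ((ι ⊕ (ι ⊕ Unit)) → k) →ₗ[k] k)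
        + (1 - t) • (LinearMap.proj (Sum.inr (Sum.inl i)) : ((ι ⊕ (ι ⊕ Unit)) → k) →ₗ[k] k)
        + (v i - w i) •
            (LinearMap.proj (Sum.inr (Sum.inr ())) : ((ι ⊕ (ι ⊕ Unit)) → k) →ₗ[k] k))
    (fun i => (LinearMap.proj (Sum.inr (Sum.inl i)) : ((ι ⊕ (ι ⊕ Unit)) → k) →ₗ[k] k)) s

/-- The affine cone directions of scalings at a pair of projective points:
the differential of a map to `ℙ × ℙ` is injective (the map is unramified at a
point) iff the preimage of `scal2` in the tangent space is zero. -/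
def scal2 {ι : Type} (p q : Pj k ι) : Submodule k ((ι ⊕ ι) → k) :=
  Submodule.span k {Sum.elim p.rep (0 : ι → k), Sum.elim (0 : ι → k) q.rep}
/-!
If `f` vanishes on the join, then for all scalars `s` and `b` the polynomial
`w ↦ f (s • w + b • y)` vanishes on the cone over `X`, because `s • w + b • y` lies on a line
joining a point of `X` to `y`. Its differential at `x` therefore kills `T_{X,x}`. By the chain
rule that differential is `s` times the differential of `f` at `s • x + b • y`, and since
everything is polynomial in `s` over an infinite field the factor `s` can be dropped. Choosing
`a • x + b • y` to represent `z` gives `T_{X,x} ⊆ T_{EJ(X,Y),z}`; symmetrically for `Y`, and the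
tangent space at `z` is linear.
-/

section Terracini

variable {ι : Type}

open Projectivization

lemma pRep_iff {v : ι → k} {p : Pj k ι} : PRep v p ↔ ∃ a : kˣ, a • p.rep = v := by
  constructor
  · rintro ⟨hv, rfl⟩
    obtain ⟨a, ha⟩ := exists_smul_eq_mk_rep k v hv
    exact ⟨a⁻¹, by rw [← ha, inv_smul_smul]⟩
  · rintro ⟨a, rfl⟩
    refine ⟨(smul_ne_zero_iff_ne a).2 p.rep_nonzero, ?_⟩
    conv_rhs => rw [← p.mk_rep]
    exact (mk_eq_mk_iff k _ _ _ p.rep_nonzero).2 ⟨a, rfl⟩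

lemma pRep_rep (p : Pj k ι) : PRep p.rep p := ⟨p.rep_nonzero, p.mk_rep⟩

lemma pRep_mk {v : ι → k} (hv : v ≠ 0) : PRep v (mk k v hv) := ⟨hv, rfl⟩

lemma mem_lineSet_iff {x y q : Pj k ι} :
    q ∈ lineSet x y ↔ q.rep ∈ Submodule.span k {x.rep, y.rep} := by
  show q.rep ∈ Submodule.span k (Projectivization.rep '' {x, y}) ↔ _
  rw [image_pair]

lemma mk_mem_lineSet_iff {x y : Pj k ι} {v : ι → k} (hv : v ≠ 0) :
    mk k v hv ∈ lineSet x y ↔ v ∈ Submodule.span k {x.rep, y.rep} := by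
  obtain ⟨a, ha⟩ := exists_smul_eq_mk_rep k v hv
  rw [mem_lineSet_iff, ← ha, Submodule.smul_mem_iff']

lemma left_mem_lineSet (x y : Pj k ι) : x ∈ lineSet x y :=
  mem_lineSet_iff.2 (Submodule.subset_span (mem_insert _ _))

lemma lineSet_comm (x y : Pj k ι) : lineSet x y = lineSet y x := by
  rw [lineSet, lineSet, pair_comm]

lemma mem_joinSet {X Y : Set (Pj k ι)} {p q r : Pj k ι} (hp : p ∈ X) (hq : q ∈ Y) (hpq : p ≠ q)
    (hr : r ∈ lineSet p q) : r ∈ joinSet X Y :=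
  mem_biUnion hp (mem_biUnion hq (mem_iUnion_of_mem hpq hr))

lemma joinSet_comm (X Y : Set (Pj k ι)) : joinSet X Y = joinSet Y X := by
  ext r
  simp only [joinSet, mem_iUnion]
  constructor <;>
  · rintro ⟨p, hp, q, hq, hpq, hr⟩
    exact ⟨q, hq, p, hp, hpq.symm, lineSet_comm p q ▸ hr⟩

lemma EJ_comm (X Y : Set (Pj k ι)) : EJ X Y = EJ Y X := by
  rw [EJ, EJ, joinSet_comm]

lemma mem_joinSet_of_mem_inter {X Y : Set (Pj k ι)} {x y p : Pj k ι} (hx : x ∈ X) (hy : y ∈ Y)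
    (hxy : x ≠ y) (hpX : p ∈ X) (hpY : p ∈ Y) : p ∈ joinSet X Y := by
  rcases eq_or_ne x p with rfl | hxp
  · exact mem_joinSet hx hy hxy (left_mem_lineSet x y)
  · exact mem_joinSet hx hpY hxp (lineSet_comm x p ▸ left_mem_lineSet p x)

lemma VI_anti {S T : Set (Pj k ι)} (h : S ⊆ T) : VI T ⊆ VI S :=
  fun _ hf p hp => hf p (h hp)

lemma exists_polynomial_eval_smul_add (e c : ι → k) (F : MvPolynomial ι k) :
    ∃ Q : Polynomial k, ∀ s : k, Q.eval s = eval (s • e + c) F := by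
  refine ⟨aeval (fun i => Polynomial.C (e i) * Polynomial.X + Polynomial.C (c i)) F, fun s => ?_⟩
  have hC : (Polynomial.evalRingHom s).comp (algebraMap k (Polynomial k)) = RingHom.id k := by
    ext; simp
  rw [aeval_def, polynomial_eval_eval₂, hC]
  refine congrArg (fun g => eval g F) (funext fun i => ?_)
  simp only [Polynomial.eval_add, Polynomial.eval_mul, Polynomial.eval_C, Polynomial.eval_X,
    Pi.add_apply, Pi.smul_apply, smul_eq_mul, mul_comm]

lemma eval_smul_add_eq_zero [Infinite k] {e c : ι → k} {F : MvPolynomial ι k}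
    (h : ∀ s : k, s ≠ 0 → eval (s • e + c) F = 0) (s : k) : eval (s • e + c) F = 0 := by
  obtain ⟨Q, hQ⟩ := exists_polynomial_eval_smul_add e c F
  have hQ0 : Q = 0 := Polynomial.eq_zero_of_infinite_isRoot Q <|
    (finite_singleton (0 : k)).infinite_compl.mono fun s hs => (hQ s).trans (h s hs)
  rw [← hQ, hQ0, Polynomial.eval_zero]

lemma eval_zero_eq_zero_of_mem_VI [Infinite k] {S : Set (Pj k ι)} {f : MvPolynomial ι k}
    (hf : f ∈ VI S) {p : Pj k ι} (hp : p ∈ S) : eval 0 f = 0 := by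
  have hline : ∀ s : k, s ≠ 0 → eval (s • p.rep + 0) f = 0 := fun s hs =>
    hf p hp _ (pRep_iff.2 ⟨Units.mk0 s hs, by simp [Units.smul_def]⟩)
  simpa using eval_smul_add_eq_zero hline 0

def affineSubst (s : k) (c : ι → k) : MvPolynomial ι k →ₐ[k] MvPolynomial ι k :=
  aeval fun i => C s * X i + C (c i)

lemma eval_affineSubst (s : k) (c w : ι → k) (f : MvPolynomial ι k) :
    eval w (affineSubst s c f) = eval (s • w + c) f := by
  show eval₂Hom (RingHom.id k) w (bind₁ _ f) = _
  rw [eval₂Hom_bind₁]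
  exact congrArg (fun g => eval g f) (funext fun i => by simp)

lemma pderiv_affineSubst (s : k) (c : ι → k) (j : ι) (f : MvPolynomial ι k) :
    pderiv j (affineSubst s c f) = C s * affineSubst s c (pderiv j f) := by
  classical
  induction f using MvPolynomial.induction_on with
  | C a => simp [affineSubst]
  | add p q hp hq => simp only [map_add, hp, hq, mul_add]
  | mul_X p i hp =>
    have hX : affineSubst s c (X i) = C s * X i + C (c i) := aeval_X _ _
    simp only [map_mul, pderiv_mul, hp, hX, map_add, pderiv_X, pderiv_C]
    rcases eq_or_ne j i with rfl | hji
    · simp only [Pi.single_eq_same, mul_one, add_zero, map_one]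
      ring
    · simp only [Pi.single_eq_of_ne hji.symm, mul_zero, add_zero, map_zero]
      ring

lemma eval_eq_zero_of_mem_VI_joinSet [Infinite k] {X Y : Set (Pj k ι)} {f : MvPolynomial ι k}
    (hf : f ∈ VI (joinSet X Y)) {x y p q : Pj k ι} (hx : x ∈ X) (hy : y ∈ Y) (hxy : x ≠ y)
    (hp : p ∈ X) (hq : q ∈ Y) {v : ι → k} (hv : v ∈ Submodule.span k {p.rep, q.rep}) :
    eval v f = 0 := by
  by_cases hv0 : v = 0
  · rw [hv0]
    exact eval_zero_eq_zero_of_mem_VI hf (mem_joinSet hx hy hxy (left_mem_lineSet x y))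
  refine hf _ ?_ v (pRep_mk hv0)
  rcases eq_or_ne p q with rfl | hpq
  · rw [pair_eq_singleton, Submodule.mem_span_singleton] at hv
    obtain ⟨t, rfl⟩ := hv
    have hmk : mk k (t • p.rep) hv0 = p := by
      conv_rhs => rw [← p.mk_rep]
      exact (mk_eq_mk_iff' k _ _ hv0 p.rep_nonzero).2 ⟨t, rfl⟩
    rw [hmk]
    exact mem_joinSet_of_mem_inter hx hy hxy hp hq
  · exact mem_joinSet hp hq hpq ((mk_mem_lineSet_iff hv0).2 hv)

lemma affineSubst_mem_VI_of_mem_VI_joinSet [Infinite k] {X Y : Set (Pj k ι)}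
    {f : MvPolynomial ι k} (hf : f ∈ VI (joinSet X Y)) {x y : Pj k ι} (hx : x ∈ X) (hy : y ∈ Y)
    (hxy : x ≠ y) (b s : k) : affineSubst s (b • y.rep) f ∈ VI X := by
  intro p hp w hw
  obtain ⟨t, rfl⟩ := pRep_iff.1 hw
  rw [eval_affineSubst]
  refine eval_eq_zero_of_mem_VI_joinSet hf hx hy hxy hp hy
    (Submodule.mem_span_pair.2 ⟨s * t, b, ?_⟩)
  rw [mul_smul, Units.smul_def]

variable [Fintype ι]

lemma jac_apply (c u : ι → k) : jac c u = ∑ i, c i * u i := by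
  simp [jac]

lemma mem_aT_iff {S : Set (Pj k ι)} {x : Pj k ι} {v : ι → k} :
    v ∈ aT S x ↔ ∀ f ∈ VI S, jac (fun i => eval x.rep (pderiv i f)) v = 0 := by
  simp only [aT, Submodule.mem_iInf, LinearMap.mem_ker]

lemma aT_mono {S T : Set (Pj k ι)} (h : S ⊆ T) (x : Pj k ι) : aT S x ≤ aT T x :=
  biInf_mono (VI_anti h)

lemma pSpan_subset_pT {S T : Set (Pj k ι)} {z : Pj k ι} (h : ∀ p ∈ S, p.rep ∈ aT T z) :
    pSpan S ⊆ pT T z := by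
  intro p hp v hv
  obtain ⟨a, rfl⟩ := pRep_iff.1 hv
  have hspan : Submodule.span k (Projectivization.rep '' S) ≤ aT T z :=
    Submodule.span_le.2 (by rintro _ ⟨q, hq, rfl⟩; exact h q hq)
  exact Submodule.smul_of_tower_mem _ a (hspan hp)

lemma jac_pderiv_eval_smul_add_eq_zero [Infinite k] {S : Set (Pj k ι)} {x : Pj k ι}
    {f : MvPolynomial ι k} {c : ι → k} (hf : ∀ s : k, affineSubst s c f ∈ VI S)
    {v : ι → k} (hv : v ∈ aT S x) (a : k) :
    jac (fun i => eval (a • x.rep + c) (pderiv i f)) v = 0 := by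
  set F := ∑ i, C (v i) * pderiv i f
  have hF : ∀ w, jac (fun i => eval w (pderiv i f)) v = eval w F := fun w => by
    simp [F, jac_apply, mul_comm]
  have hscaled : ∀ s : k, s * eval (s • x.rep + c) F = 0 := fun s => by
    have h := mem_aT_iff.1 hv _ (hf s)
    simpa [jac_apply, pderiv_affineSubst, eval_affineSubst, F, Finset.mul_sum, mul_comm,
      mul_left_comm] using h
  rw [hF]
  exact eval_smul_add_eq_zero (fun s hs => (mul_eq_zero.1 (hscaled s)).resolve_left hs) a

lemma aT_le_aT_joinSet [Infinite k] {X Y : Set (Pj k ι)} {x y z : Pj k ι} (hx : x ∈ X)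
    (hy : y ∈ Y) (hxy : x ≠ y) (hz : z ∈ lineSet x y) : aT X x ≤ aT (joinSet X Y) z := by
  obtain ⟨a, b, hab⟩ := Submodule.mem_span_pair.1 (mem_lineSet_iff.1 hz)
  intro v hv
  refine mem_aT_iff.2 fun f hf => ?_
  rw [← hab]
  exact jac_pderiv_eval_smul_add_eq_zero (affineSubst_mem_VI_of_mem_VI_joinSet hf hx hy hxy b) hv a

lemma aT_le_aT_EJ [Infinite k] {X Y : Set (Pj k ι)} {x y z : Pj k ι} (hx : x ∈ X)
    (hy : y ∈ Y) (hxy : x ≠ y) (hz : z ∈ lineSet x y) : aT X x ≤ aT (EJ X Y) z :=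
  (aT_le_aT_joinSet hx hy hxy hz).trans (aT_mono (@subset_closure _ (PT k ι) _) z)

end Terracini

theorem statement6_general {k : Type} [Field k] [IsAlgClosed k] {n : ℕ}
    (X Y : Set (Pj k (Fin (n + 1))))
    (x y z : Pj k (Fin (n + 1)))
    (hx : x ∈ X) (hy : y ∈ Y) (hxy : x ≠ y) (hz : z ∈ lineSet x y) :
    pSpan (pT X x ∪ pT Y y) ⊆ pT (EJ X Y) z := by
  refine pSpan_subset_pT ?_
  rintro p (hp | hp)
  · exact aT_le_aT_EJ hx hy hxy hz (hp _ (pRep_rep p))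
  · rw [EJ_comm]
    exact aT_le_aT_EJ hy hx hxy.symm (lineSet_comm x y ▸ hz) (hp _ (pRep_rep p))

/-- **Terracini's lemma (containment).** For `x ∈ X`, `y ∈ Y` distinct and any
`z` on the line through `x` and `y`,
`span(T_{X,x}, T_{Y,y}) ⊆ T_{EJ(X,Y),z}`. -/
theorem statement6 {k : Type} [Field k] [IsAlgClosed k] {n : ℕ}
    (X Y : Set (Pj k (Fin (n + 1))))
    (hXcl : @IsClosed _ (PT k (Fin (n + 1))) X)
    (hXirr : @IsIrreducible _ (PT k (Fin (n + 1))) X)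
    (hYcl : @IsClosed _ (PT k (Fin (n + 1))) Y)
    (hYirr : @IsIrreducible _ (PT k (Fin (n + 1))) Y)
    (x y z : Pj k (Fin (n + 1)))
    (hx : x ∈ X) (hy : y ∈ Y) (hxy : x ≠ y) (hz : z ∈ lineSet x y) :
    pSpan (pT X x ∪ pT Y y) ⊆ pT (EJ X Y) z :=
  statement6_general X Y x y z hx hy hxy hz
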